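/- Cut validity: if V̲_{t+1} ≤ V_{t+1} pointwise, λ is a subgradient at x^k of the function x ↦ min_{u ∈ U(x)} Σᵢ pᵢ [L(x,u,wᵢ) + V̲_{t+1}(f(x,u,wᵢ))], denoted φ, and β = φ(x^k) - ⟨λ, x^k⟩, then the affine function x ↦ ⟨λ, x⟩ + β minorizes the true Bellman function V_t everywhere, i.e. ⟨λ, x⟩ + β ≤ V_t(x) for all x. -/
import Mathlib


/-- Cut validity: if `V̲₊ ≤ V₊` pointwise, `λ` is a subgradient at `x^k` of the convex function
`φ x = min_{u ∈ U x} Σ_i p_i [L x u w_i + V̲₊ (f x u w_i)]`, and `β = φ x^k - ⟨λ, x^k⟩`,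
then the affine cut `x ↦ ⟨λ, x⟩ + β` minorizes the true Bellman function
`V x = min_{u ∈ U x} Σ_i p_i [L x u w_i + V₊ (f x u w_i)]` everywhere. -/
theorem stmt4 (n m k S : ℕ)
    (w : Fin S → (Fin k → ℝ)) (p : Fin S → ℝ)
    (hp : ∀ i, 0 ≤ p i) (hpsum : ∑ i, p i = 1)
    (L : (Fin n → ℝ) → (Fin m → ℝ) → (Fin k → ℝ) → ℝ)
    (f : (Fin n → ℝ) → (Fin m → ℝ) → (Fin k → ℝ) → (Fin n → ℝ))
    (U : (Fin n → ℝ) → Set (Fin m → ℝ))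
    (Vnext Vlow : (Fin n → ℝ) → ℝ) (hle : ∀ x, Vlow x ≤ Vnext x)
    (φ V : (Fin n → ℝ) → ℝ)
    (hφ : ∀ x, IsLeast
      {v : ℝ | ∃ u ∈ U x, v = ∑ i, p i * (L x u (w i) + Vlow (f x u (w i)))} (φ x))
    (hV : ∀ x, IsLeast
      {v : ℝ | ∃ u ∈ U x, v = ∑ i, p i * (L x u (w i) + Vnext (f x u (w i)))} (V x))
    (lam : Fin n → ℝ) (xk : Fin n → ℝ)
    (hsub : ∀ x, φ xk + ∑ i, lam i * (x i - xk i) ≤ φ x)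
    (β : ℝ) (hβ : β = φ xk - ∑ i, lam i * xk i) :
    ∀ x, ∑ i, lam i * x i + β ≤ V x := by
  intro x
  have hφV : φ x ≤ V x := by
    obtain ⟨hmemV, _⟩ := hV x
    obtain ⟨u, hu, huv⟩ := hmemV
    obtain ⟨_, hlb⟩ := hφ x
    calc φ x ≤ ∑ i, p i * (L x u (w i) + Vlow (f x u (w i))) := hlb ⟨u, hu, rfl⟩
      _ ≤ ∑ i, p i * (L x u (w i) + Vnext (f x u (w i))) := by
          apply Finset.sum_le_sum
          intro i _
          exact mul_le_mul_of_nonneg_left (by linarith [hle (f x u (w i))]) (hp i)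
      _ = V x := huv.symm
  have h := hsub x
  have : ∑ i, lam i * (x i - xk i) = ∑ i, lam i * x i - ∑ i, lam i * xk i := by
    rw [← Finset.sum_sub_distrib]; congr 1; ext i; ring
  rw [this] at h
  linarith
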